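/- arXiv:2501.13079 — 2 statements merged into one kernel-verified Lean document; each statement's English description precedes it below -/
import Mathlib

section
/- Let X be a finite set, T a stochastic matrix on X, L the associated generator, and π a fully supported probability measure on X with πT = π. Let μ be a probability measure on X, and for s ≥ 0 let μ_s = μ·exp(sL) (row vector acted on by the matrix exponential) and f_s(x) = μ_s(x)/π(x). Fix t ≥ 0 and assume f_t(x) > 0 for all x ∈ X. Then the map s ↦ ∑_x π(x) f_s(x) log f_s(x) is differentiable at s = t with derivative equal to ∑_x π(x) f_t(x)·(L log f_t)(x). -/
variable {X : Type*}

/-- `T` is a stochastic matrix: nonnegative entries and unit row sums. -/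
def IsStochastic [Fintype X] (T : X → X → ℝ) : Prop :=
  (∀ x y, 0 ≤ T x y) ∧ ∀ x, ∑ y, T x y = 1

/-- The generator: `(L f)(x) = ∑_y T(x,y) (f(y) - f(x))`. -/
noncomputable def gen [Fintype X] (T : X → X → ℝ) (f : X → ℝ) : X → ℝ :=
  fun x => ∑ y, T x y * (f y - f x)

/-- The carré du champ operator: `(Γ f)(x) = (1/2) ∑_y T(x,y) (f(y) - f(x))²`. -/
noncomputable def carre [Fintype X] (T : X → X → ℝ) (f : X → ℝ) : X → ℝ :=
  fun x => (1 / 2) * ∑ y, T x y * (f y - f x) ^ 2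

/-- The generator as a matrix: `L = T - Id`. -/
noncomputable def genMat [Fintype X] [DecidableEq X] (T : X → X → ℝ) : Matrix X X ℝ :=
  fun x y => T x y - if x = y then 1 else 0

/-- The heat semigroup `P_t = exp (t L)` (matrix exponential). -/
noncomputable def heatSG [Fintype X] [DecidableEq X] (T : X → X → ℝ) (t : ℝ) : Matrix X X ℝ :=
  NormedSpace.exp (t • genMat T)

/-- Evolution of a measure (row vector) `μ_t = μ · exp (t L)`. -/
noncomputable def evolve [Fintype X] [DecidableEq X] (T : X → X → ℝ) (μ : X → ℝ) (t : ℝ) :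
    X → ℝ :=
  Matrix.vecMul μ (heatSG T t)

/-!
Since `μ_s = μ exp(sL)`, the row vector `μ_s` has derivative `μ_t L` at `t`, and
`u ↦ π (u/π) log (u/π)` has derivative `log (u/π) + 1` wherever `u/π ≠ 0`. The derivative of the
entropy is therefore `⟨μ_t L, log f_t + 1⟩ = ⟨μ_t, L (log f_t + 1)⟩ = ⟨μ_t, L log f_t⟩`: the matrix
`T - 1` acts on column vectors as the generator because the rows of `T` sum to one, and the
generator kills constants.
-/

open Matrix

theorem gen_add_const [Fintype X] (T : X → X → ℝ) (g : X → ℝ) (c : ℝ) :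
    gen T (fun x => g x + c) = gen T g := by
  ext x; simp [gen]

theorem HasDerivAt.const_mul_mul_log {f : ℝ → ℝ} {f' t : ℝ} (c : ℝ) (hf : HasDerivAt f f' t)
    (ht : f t ≠ 0) :
    HasDerivAt (fun s => c * f s * Real.log (f s)) (c * f' * (Real.log (f t) + 1)) t := by
  simpa [mul_assoc, mul_comm, mul_left_comm] using
    ((Real.hasDerivAt_mul_log ht).comp t hf).const_mul c

section

variable [Fintype X] [DecidableEq X]

theorem hasDerivAt_evolve (T : X → X → ℝ) (μ : X → ℝ) (t : ℝ) :
    HasDerivAt (evolve T μ) (evolve T μ t ᵥ* genMat T) t := by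
  -- Any matrix norm will do: all of them induce the product topology.
  let _ : NormedRing (Matrix X X ℝ) := Matrix.linftyOpNormedRing
  let _ : NormedAlgebra ℝ (Matrix X X ℝ) := Matrix.linftyOpNormedAlgebra
  have hexp : HasDerivAt (heatSG T) (heatSG T t * genMat T) t :=
    hasDerivAt_exp_smul_const (genMat T) t
  exact ((LinearMap.toContinuousLinearMap (vecMulBilin ℝ ℝ μ)).hasFDerivAt.comp_hasDerivAt t
    hexp).congr_deriv (vecMul_vecMul μ (heatSG T t) (genMat T)).symm

theorem genMat_mulVec (T : X → X → ℝ) (hrow : ∀ x, ∑ y, T x y = 1) (g : X → ℝ) :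
    genMat T *ᵥ g = gen T g := by
  ext x
  simp [mulVec, dotProduct, genMat, gen, sub_mul, mul_sub, Finset.sum_sub_distrib,
    ← Finset.sum_mul, hrow]

theorem vecMul_genMat_dotProduct_add_one (T : X → X → ℝ) (hrow : ∀ x, ∑ y, T x y = 1)
    (ν g : X → ℝ) :
    (ν ᵥ* genMat T) ⬝ᵥ (fun x => g x + 1) = ν ⬝ᵥ gen T g := by
  rw [← dotProduct_mulVec, genMat_mulVec T hrow, gen_add_const]

end

theorem entropy_hasDerivAt_general [Fintype X] [DecidableEq X] (T : X → X → ℝ) (hT : IsStochastic T)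
    (pi : X → ℝ) (μ : X → ℝ) (t : ℝ) (hft : ∀ x, 0 < evolve T μ t x / pi x) :
    HasDerivAt
      (fun s => ∑ x, pi x * (evolve T μ s x / pi x) * Real.log (evolve T μ s x / pi x))
      (∑ x, pi x * (evolve T μ t x / pi x) *
        gen T (fun z => Real.log (evolve T μ t z / pi z)) x) t := by
  have hpi (x : X) : pi x ≠ 0 := fun h => by simpa [h] using hft x
  have hsummand (x : X) := (((hasDerivAt_pi.1 (hasDerivAt_evolve T μ t)) x).div_const
    (pi x)).const_mul_mul_log (pi x) (hft x).ne'
  refine (HasDerivAt.fun_sum fun x _ => hsummand x).congr_deriv ?_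
  calc _ = (evolve T μ t ᵥ* genMat T) ⬝ᵥ fun x => Real.log (evolve T μ t x / pi x) + 1 := by
        simp only [dotProduct, mul_div_cancel₀ _ (hpi _)]
    _ = evolve T μ t ⬝ᵥ gen T fun x => Real.log (evolve T μ t x / pi x) :=
        vecMul_genMat_dotProduct_add_one T hT.2 _ _
    _ = _ := by simp only [dotProduct, mul_div_cancel₀ _ (hpi _)]

/-- differentiability of the entropy along the flow, with derivative
`∑_x π(x) f_t(x) (L log f_t)(x)` at time `t`. -/
theorem entropy_hasDerivAt [Fintype X] [DecidableEq X] (T : X → X → ℝ) (hT : IsStochastic T)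
    (pi : X → ℝ) (hpos : ∀ x, 0 < pi x) (hsum : ∑ x, pi x = 1)
    (hstat : ∀ y, ∑ x, pi x * T x y = pi y)
    (μ : X → ℝ) (hμ0 : ∀ x, 0 ≤ μ x) (hμ1 : ∑ x, μ x = 1)
    (t : ℝ) (ht : 0 ≤ t) (hft : ∀ x, 0 < evolve T μ t x / pi x) :
    HasDerivAt
      (fun s => ∑ x, pi x * (evolve T μ s x / pi x) * Real.log (evolve T μ s x / pi x))
      (∑ x, pi x * (evolve T μ t x / pi x) *
        gen T (fun z => Real.log (evolve T μ t z / pi z)) x) t :=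
  entropy_hasDerivAt_general T hT pi μ t hft
end

section
/- Let X and Y be finite sets, T a stochastic matrix on X, Φ : X → Y a surjective map, and T̂ a stochastic matrix on Y such that for all x ∈ X and y ∈ Y, ∑_{z : Φ(z)=y} T(x,z) = T̂(Φ(x), y). If T is non-negatively curved, i.e. Γ(exp(tL)g) ≤ exp(tL)(Γg) pointwise for all g : X → ℝ and t ≥ 0, then T̂ is non-negatively curved, i.e. Γ̂(exp(tL̂)f) ≤ exp(tL̂)(Γ̂f) pointwise for all f : Y → ℝ and t ≥ 0. -/
/-!
Pulling functions on `Y` back along a lumping `Φ` intertwines the two chains: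
`L (f ∘ Φ) = (L̂ f) ∘ Φ`, hence `exp (t L) (f ∘ Φ) = (exp (t L̂) f) ∘ Φ`, and likewise
`Γ (f ∘ Φ) = (Γ̂ f) ∘ Φ`. Applying the curvature inequality of `T` to `g = f ∘ Φ` at a preimage
of `y` therefore gives the inequality for `T̂` at `y`.
-/

variable {X : Type*}

open NormedSpace Finset

namespace Matrix

variable {m n : Type*} [Fintype m] [DecidableEq m] [Fintype n] [DecidableEq n]

theorem pow_mul_eq_mul_pow_of_mul_eq_mul {α : Type*} [Semiring α] {A : Matrix m m α}
    {B : Matrix n n α} {P : Matrix m n α} (h : A * P = P * B) (k : ℕ) :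
    A ^ k * P = P * B ^ k := by
  induction k with
  | zero => simp
  | succ k ih => rw [pow_succ, pow_succ, Matrix.mul_assoc, h, ← Matrix.mul_assoc, ih,
      Matrix.mul_assoc]

theorem exp_mul_eq_mul_exp_of_mul_eq_mul {𝕂 : Type*} [RCLike 𝕂] {A : Matrix m m 𝕂}
    {B : Matrix n n 𝕂} {P : Matrix m n 𝕂} (h : A * P = P * B) : exp A * P = P * exp B := by
  open scoped Norms.Operator in
  have hA : HasSum (fun k => ((k.factorial : 𝕂)⁻¹ • A ^ k) * P) (exp A * P) := by
    rw [exp_eq_tsum 𝕂]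
    exact (expSeries_summable' A).hasSum.map (mulRightLinearMap m 𝕂 P)
      (continuous_id.matrix_mul continuous_const)
  have hB : HasSum (fun k => P * ((k.factorial : 𝕂)⁻¹ • B ^ k)) (P * exp B) := by
    rw [exp_eq_tsum 𝕂]
    exact (expSeries_summable' B).hasSum.map (mulLeftLinearMap n 𝕂 P)
      (continuous_const.matrix_mul continuous_id)
  simp_rw [smul_mul, pow_mul_eq_mul_pow_of_mul_eq_mul h, ← Matrix.mul_smul] at hA
  exact hA.unique hB

end Matrix

section Lumping

variable {Y : Type*} [Fintype Y] [DecidableEq Y]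

def pullbackMat (Φ : X → Y) : Matrix X Y ℝ :=
  Matrix.of fun x y => if Φ x = y then 1 else 0

theorem pullbackMat_mulVec (Φ : X → Y) (f : Y → ℝ) : (pullbackMat Φ).mulVec f = f ∘ Φ := by
  ext x
  simp [pullbackMat, Matrix.mulVec, dotProduct]

variable [Fintype X]

def IsLumping (T : X → X → ℝ) (T' : Y → Y → ℝ) (Φ : X → Y) : Prop :=
  ∀ x y, ∑ z ∈ univ.filter fun z => Φ z = y, T x z = T' (Φ x) y

variable {T : X → X → ℝ} {T' : Y → Y → ℝ} {Φ : X → Y}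

theorem IsLumping.genMat_mul_pullbackMat [DecidableEq X]
    (hΦ : IsLumping T T' Φ) : genMat T * pullbackMat Φ = pullbackMat Φ * genMat T' := by
  ext x y
  simp only [Matrix.mul_apply, pullbackMat, genMat, Matrix.of_apply, mul_ite, ite_mul, mul_one,
    mul_zero, one_mul, zero_mul]
  rw [← sum_filter, sum_sub_distrib, hΦ x y]
  simp

theorem IsLumping.heatSG_mulVec_comp [DecidableEq X] (hΦ : IsLumping T T' Φ)
    (t : ℝ) (f : Y → ℝ) : (heatSG T t).mulVec (f ∘ Φ) = (heatSG T' t).mulVec f ∘ Φ := by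
  have hgen : t • genMat T * pullbackMat Φ = pullbackMat Φ * t • genMat T' := by
    rw [Matrix.smul_mul, Matrix.mul_smul, hΦ.genMat_mul_pullbackMat]
  rw [← pullbackMat_mulVec, ← pullbackMat_mulVec, Matrix.mulVec_mulVec, Matrix.mulVec_mulVec,
    heatSG, heatSG, Matrix.exp_mul_eq_mul_exp_of_mul_eq_mul hgen]

theorem IsLumping.carre_comp (hΦ : IsLumping T T' Φ) (f : Y → ℝ) :
    carre T (f ∘ Φ) = carre T' f ∘ Φ := by
  ext x
  simp only [carre, Function.comp_apply]
  rw [← sum_fiberwise_of_maps_to (g := Φ) fun z _ => mem_univ (Φ z)]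
  congr 1
  refine sum_congr rfl fun y _ => ?_
  rw [← hΦ x y, sum_mul]
  exact sum_congr rfl fun z hz => by rw [(mem_filter.mp hz).2]

end Lumping

theorem markovian_projection_curvature_general {Y : Type*} [Fintype X] [DecidableEq X]
    [Fintype Y] [DecidableEq Y]
    (T : X → X → ℝ)
    (Φ : X → Y) (hsurj : Function.Surjective Φ)
    (T' : Y → Y → ℝ)
    (hproj : ∀ (x : X) (y : Y),
      ∑ z ∈ Finset.univ.filter fun z => Φ z = y, T x z = T' (Φ x) y)
    (hcurv : ∀ t : ℝ, 0 ≤ t → ∀ g : X → ℝ, ∀ x : X,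
      carre T ((heatSG T t).mulVec g) x ≤ (heatSG T t).mulVec (carre T g) x) :
    ∀ t : ℝ, 0 ≤ t → ∀ f : Y → ℝ, ∀ y : Y,
      carre T' ((heatSG T' t).mulVec f) y ≤ (heatSG T' t).mulVec (carre T' f) y := by
  intro t ht f y
  obtain ⟨x, rfl⟩ := hsurj y
  have hΦ : IsLumping T T' Φ := hproj
  calc carre T' ((heatSG T' t).mulVec f) (Φ x)
      = carre T ((heatSG T t).mulVec (f ∘ Φ)) x := by
        rw [hΦ.heatSG_mulVec_comp, hΦ.carre_comp, Function.comp_apply]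
    _ ≤ (heatSG T t).mulVec (carre T (f ∘ Φ)) x := hcurv t ht _ x
    _ = (heatSG T' t).mulVec (carre T' f) (Φ x) := by
        rw [hΦ.carre_comp, hΦ.heatSG_mulVec_comp, Function.comp_apply]

/-- Non-negative curvature is preserved under Markovian projection. -/
theorem markovian_projection_curvature {Y : Type*} [Fintype X] [DecidableEq X]
    [Fintype Y] [DecidableEq Y]
    (T : X → X → ℝ) (hT : IsStochastic T)
    (Φ : X → Y) (hsurj : Function.Surjective Φ)
    (T' : Y → Y → ℝ) (hT' : IsStochastic T')
    (hproj : ∀ (x : X) (y : Y),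
      ∑ z ∈ Finset.univ.filter fun z => Φ z = y, T x z = T' (Φ x) y)
    (hcurv : ∀ t : ℝ, 0 ≤ t → ∀ g : X → ℝ, ∀ x : X,
      carre T ((heatSG T t).mulVec g) x ≤ (heatSG T t).mulVec (carre T g) x) :
    ∀ t : ℝ, 0 ≤ t → ∀ f : Y → ℝ, ∀ y : Y,
      carre T' ((heatSG T' t).mulVec f) y ≤ (heatSG T' t).mulVec (carre T' f) y :=
  markovian_projection_curvature_general T Φ hsurj T' hproj hcurv
end
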